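/- arXiv:0906.3667 — 2 statements merged into one kernel-verified Lean document; each statement's English description precedes it below -/
import Mathlib

section
/- Let A_1, …, A_K be rectangular complex matrices of the same size and r ≥ 0 an integer. Then s_{Kr+1}^{A_1+⋯+A_K} ≤ s_{r+1}^{A_1} + ⋯ + s_{r+1}^{A_K}, where s_i^M is the i-th largest singular value of M (0 for i > rank M). -/
open Matrix
open scoped ComplexOrder

/-- The `i`-th largest singular value (1-indexed) of a rectangular complex matrix,
defined to be `0` when `i` is out of range (in particular when `i > rank M`). -/
noncomputable def sv {p q : ℕ} (M : Matrix (Fin p) (Fin q) ℂ) (i : ℕ) : ℝ :=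
  if h : 1 ≤ i ∧ i ≤ q then
    Real.sqrt ((Matrix.posSemidef_conjTranspose_mul_self M).1.eigenvalues
      (Tuple.sort ((Matrix.posSemidef_conjTranspose_mul_self M).1.eigenvalues)
        ⟨q - i, by omega⟩))
  else 0

/-!
The squared singular values of `M` are the eigenvalues of `MᴴM`, and `‖M x‖² = ⟪x, MᴴM x⟫`.
Hence `‖M x‖ ≤ s_{r+1}(M) ‖x‖` on the span of the eigenvectors for the `q - r` smallest
eigenvalues, a subspace of codimension `r`, while `s_m(M) ‖x‖ ≤ ‖M x‖` on the `m`-dimensional span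
of those for the `m` largest ones. Intersecting the first subspaces of the `A_k` gives codimension
at most `K r` and the bound `‖(∑ A_k) x‖ ≤ (∑ s_{r+1}(A_k)) ‖x‖`; by a dimension count this
subspace meets the `(K r + 1)`-dimensional subspace for `∑ A_k` in a nonzero vector, where the
two bounds compare.
-/

open Module Submodule RCLike
open scoped InnerProductSpace

theorem Submodule.finrank_add_finrank_le_finrank_inf_add {K V : Type*} [DivisionRing K]
    [AddCommGroup V] [Module K V] [FiniteDimensional K V] (s t : Submodule K V) :
    finrank K s + finrank K t ≤ finrank K ↥(s ⊓ t) + finrank K V := by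
  rw [← s.finrank_sup_add_finrank_inf_eq t, add_comm (finrank K ↥(s ⊔ t))]
  exact Nat.add_le_add_left (Submodule.finrank_le _) _

theorem Submodule.exists_mem_inf_ne_zero_of_finrank_lt {K V : Type*} [DivisionRing K]
    [AddCommGroup V] [Module K V] [FiniteDimensional K V] {s t : Submodule K V}
    (h : finrank K V < finrank K s + finrank K t) : ∃ x ∈ s, x ∈ t ∧ x ≠ 0 := by
  by_contra! hst
  exact h.not_ge <| finrank_add_finrank_le_of_disjoint <|
    Submodule.disjoint_def.mpr hst

namespace OrthonormalBasis

variable {𝕜 E ι : Type*} [RCLike 𝕜] [NormedAddCommGroup E] [InnerProductSpace 𝕜 E] [Fintype ι]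
  (b : OrthonormalBasis ι 𝕜 E)

theorem inner_eq_zero_of_mem_span_image {s : Set ι} {x : E} (hx : x ∈ span 𝕜 (b '' s))
    {j : ι} (hj : j ∉ s) : ⟪b j, x⟫_𝕜 = 0 := by
  refine mem_orthogonal_singleton_iff_inner_right.mp (span_le.mpr ?_ hx)
  rintro _ ⟨i, hi, rfl⟩
  exact mem_orthogonal_singleton_iff_inner_right.mpr
    (b.orthonormal.2 fun hij => hj (hij ▸ hi))

theorem finrank_span_image (s : Finset ι) : finrank 𝕜 (span 𝕜 (b '' s)) = s.card := by
  have hli : LinearIndependent 𝕜 (fun i : (s : Set ι) => b i) :=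
    b.orthonormal.linearIndependent.comp _ Subtype.val_injective
  rw [Set.image_eq_range, finrank_span_eq_card hli]
  simp

variable {b} {T : E →ₗ[𝕜] E} {μ : ι → ℝ}

theorem re_inner_map_self_eq_sum (hT : ∀ j, T (b j) = (μ j : 𝕜) • b j) (x : E) :
    re ⟪x, T x⟫_𝕜 = ∑ j, μ j * ‖⟪b j, x⟫_𝕜‖ ^ 2 := by
  have hTx : T x = ∑ j, ((μ j : 𝕜) * ⟪b j, x⟫_𝕜) • b j := by
    conv_lhs => rw [← b.sum_repr' x]
    simp only [map_sum, map_smul, hT, smul_smul, mul_comm]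
  simp only [hTx, inner_sum, inner_smul_right, map_sum]
  refine Finset.sum_congr rfl fun j _ => ?_
  rw [← inner_conj_symm x (b j), mul_assoc, RCLike.mul_conj]
  norm_cast

theorem re_inner_map_self_le_of_mem_span (hT : ∀ j, T (b j) = (μ j : 𝕜) • b j) {s : Set ι}
    {c : ℝ} (hμ : ∀ j ∈ s, μ j ≤ c) {x : E} (hx : x ∈ span 𝕜 (b '' s)) :
    re ⟪x, T x⟫_𝕜 ≤ c * ‖x‖ ^ 2 := by
  rw [re_inner_map_self_eq_sum hT, ← b.sum_sq_norm_inner_right, Finset.mul_sum]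
  refine Finset.sum_le_sum fun j _ => ?_
  by_cases hj : j ∈ s
  · exact mul_le_mul_of_nonneg_right (hμ j hj) (sq_nonneg _)
  · simp [b.inner_eq_zero_of_mem_span_image hx hj]

theorem le_re_inner_map_self_of_mem_span (hT : ∀ j, T (b j) = (μ j : 𝕜) • b j) {s : Set ι}
    {c : ℝ} (hμ : ∀ j ∈ s, c ≤ μ j) {x : E} (hx : x ∈ span 𝕜 (b '' s)) :
    c * ‖x‖ ^ 2 ≤ re ⟪x, T x⟫_𝕜 := by
  rw [re_inner_map_self_eq_sum hT, ← b.sum_sq_norm_inner_right, Finset.mul_sum]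
  refine Finset.sum_le_sum fun j _ => ?_
  by_cases hj : j ∈ s
  · exact mul_le_mul_of_nonneg_right (hμ j hj) (sq_nonneg _)
  · simp [b.inner_eq_zero_of_mem_span_image hx hj]

end OrthonormalBasis

namespace Matrix

variable {𝕜 m : Type*} [RCLike 𝕜] [Fintype m] [DecidableEq m]

theorem norm_toEuclideanLin_sq {n : Type*} [Fintype n] [DecidableEq n] (A : Matrix m n 𝕜)
    (x : EuclideanSpace 𝕜 n) :
    ‖toEuclideanLin A x‖ ^ 2 = re ⟪x, toEuclideanLin (Aᴴ * A) x⟫_𝕜 := by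
  rw [toLpLin_mul_same, LinearMap.comp_apply, toEuclideanLin_conjTranspose_eq_adjoint,
    LinearMap.adjoint_inner_right, inner_self_eq_norm_sq]

namespace IsHermitian

variable {q : ℕ} {A : Matrix (Fin q) (Fin q) 𝕜} (hA : A.IsHermitian)

noncomputable def sortedEigenvalues : Fin q → ℝ := hA.eigenvalues ∘ Tuple.sort hA.eigenvalues

noncomputable def sortedEigenvectorBasis :
    OrthonormalBasis (Fin q) 𝕜 (EuclideanSpace 𝕜 (Fin q)) :=
  hA.eigenvectorBasis.reindex (Tuple.sort hA.eigenvalues).symm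

theorem monotone_sortedEigenvalues : Monotone hA.sortedEigenvalues :=
  Tuple.monotone_sort _

theorem toEuclideanLin_sortedEigenvectorBasis (j : Fin q) :
    toEuclideanLin A (hA.sortedEigenvectorBasis j) =
      (hA.sortedEigenvalues j : 𝕜) • hA.sortedEigenvectorBasis j := by
  rw [sortedEigenvectorBasis, OrthonormalBasis.reindex_apply, Equiv.symm_symm, toLpLin_apply,
    hA.mulVec_eigenvectorBasis, WithLp.toLp_smul, WithLp.toLp_ofLp,
    RCLike.real_smul_eq_coe_smul (K := 𝕜)]
  rfl

end IsHermitian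

theorem norm_toEuclideanLin_le_of_mem_span {q : ℕ} (A : Matrix m (Fin q) 𝕜) {s : Set (Fin q)}
    {c : ℝ}
    (hc : ∀ j ∈ s, (isHermitian_conjTranspose_mul_self A).sortedEigenvalues j ≤ c)
    {x : EuclideanSpace 𝕜 (Fin q)}
    (hx : x ∈ span 𝕜 ((isHermitian_conjTranspose_mul_self A).sortedEigenvectorBasis '' s)) :
    ‖toEuclideanLin A x‖ ≤ √c * ‖x‖ := by
  have h := (isHermitian_conjTranspose_mul_self A).toEuclideanLin_sortedEigenvectorBasis
  calc ‖toEuclideanLin A x‖ = √(‖toEuclideanLin A x‖ ^ 2) := (Real.sqrt_sq (norm_nonneg _)).symm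
    _ ≤ √(c * ‖x‖ ^ 2) := by
      rw [norm_toEuclideanLin_sq]
      exact Real.sqrt_le_sqrt (OrthonormalBasis.re_inner_map_self_le_of_mem_span h hc hx)
    _ = √c * ‖x‖ := by rw [Real.sqrt_mul' _ (sq_nonneg _), Real.sqrt_sq (norm_nonneg _)]

theorem le_norm_toEuclideanLin_of_mem_span {q : ℕ} (A : Matrix m (Fin q) 𝕜) {s : Set (Fin q)}
    {c : ℝ}
    (hc : ∀ j ∈ s, c ≤ (isHermitian_conjTranspose_mul_self A).sortedEigenvalues j)
    {x : EuclideanSpace 𝕜 (Fin q)}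
    (hx : x ∈ span 𝕜 ((isHermitian_conjTranspose_mul_self A).sortedEigenvectorBasis '' s)) :
    √c * ‖x‖ ≤ ‖toEuclideanLin A x‖ := by
  have h := (isHermitian_conjTranspose_mul_self A).toEuclideanLin_sortedEigenvectorBasis
  calc √c * ‖x‖ = √(c * ‖x‖ ^ 2) := by
        rw [Real.sqrt_mul' _ (sq_nonneg _), Real.sqrt_sq (norm_nonneg _)]
    _ ≤ √(‖toEuclideanLin A x‖ ^ 2) := by
      rw [norm_toEuclideanLin_sq]
      exact Real.sqrt_le_sqrt (OrthonormalBasis.le_re_inner_map_self_of_mem_span h hc hx)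
    _ = ‖toEuclideanLin A x‖ := Real.sqrt_sq (norm_nonneg _)

end Matrix

section SingularValues

variable {p q : ℕ}

theorem sv_nonneg (M : Matrix (Fin p) (Fin q) ℂ) (i : ℕ) : 0 ≤ sv M i := by
  unfold sv
  split_ifs
  exacts [Real.sqrt_nonneg _, le_rfl]

theorem sv_eq_sqrt_sortedEigenvalues (M : Matrix (Fin p) (Fin q) ℂ) {i : ℕ} (hi : 1 ≤ i)
    (hiq : i ≤ q) :
    sv M i = √((isHermitian_conjTranspose_mul_self M).sortedEigenvalues ⟨q - i, by omega⟩) :=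
  dif_pos ⟨hi, hiq⟩

theorem exists_subspace_norm_le_sv (M : Matrix (Fin p) (Fin q) ℂ) (r : ℕ) :
    ∃ W : Submodule ℂ (EuclideanSpace ℂ (Fin q)), q ≤ finrank ℂ W + r ∧
      ∀ x ∈ W, ‖toEuclideanLin M x‖ ≤ sv M (r + 1) * ‖x‖ := by
  rcases le_or_gt q r with hqr | hrq
  · exact ⟨⊥, by simpa using hqr, fun x hx => by simp [(mem_bot ℂ).mp hx]⟩
  set hM := isHermitian_conjTranspose_mul_self M
  let i₀ : Fin q := ⟨q - (r + 1), by omega⟩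
  refine ⟨span ℂ (hM.sortedEigenvectorBasis '' ↑(Finset.Iic i₀)), ?_, fun x hx => ?_⟩
  · rw [hM.sortedEigenvectorBasis.finrank_span_image, Fin.card_Iic]
    simp only [i₀]
    omega
  · rw [sv_eq_sqrt_sortedEigenvalues M (by omega) (by omega)]
    exact norm_toEuclideanLin_le_of_mem_span M
      (fun j hj => hM.monotone_sortedEigenvalues (Finset.mem_Iic.mp hj)) hx

theorem exists_subspace_sv_le_norm (M : Matrix (Fin p) (Fin q) ℂ) {m : ℕ} (hm : 1 ≤ m)
    (hmq : m ≤ q) :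
    ∃ V : Submodule ℂ (EuclideanSpace ℂ (Fin q)), finrank ℂ V = m ∧
      ∀ x ∈ V, sv M m * ‖x‖ ≤ ‖toEuclideanLin M x‖ := by
  set hM := isHermitian_conjTranspose_mul_self M
  let i₀ : Fin q := ⟨q - m, by omega⟩
  refine ⟨span ℂ (hM.sortedEigenvectorBasis '' ↑(Finset.Ici i₀)), ?_, fun x hx => ?_⟩
  · rw [hM.sortedEigenvectorBasis.finrank_span_image, Fin.card_Ici]
    simp only [i₀]
    omega
  · rw [sv_eq_sqrt_sortedEigenvalues M hm hmq]
    exact le_norm_toEuclideanLin_of_mem_span M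
      (fun j hj => hM.monotone_sortedEigenvalues (Finset.mem_Ici.mp hj)) hx

theorem exists_subspace_norm_sum_le {ι : Type*} (A : ι → Matrix (Fin p) (Fin q) ℂ) (r : ℕ)
    (t : Finset ι) :
    ∃ W : Submodule ℂ (EuclideanSpace ℂ (Fin q)), q ≤ finrank ℂ W + t.card * r ∧
      ∀ x ∈ W, ‖toEuclideanLin (∑ k ∈ t, A k) x‖ ≤ (∑ k ∈ t, sv (A k) (r + 1)) * ‖x‖ := by
  classical
  induction t using Finset.induction with
  | empty => exact ⟨⊤, by simp, fun x _ => by simp⟩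
  | insert k t hk ih =>
    obtain ⟨W, hWrank, hW⟩ := ih
    obtain ⟨Wk, hWkrank, hWk⟩ := exists_subspace_norm_le_sv (A k) r
    refine ⟨Wk ⊓ W, ?_, fun x hx => ?_⟩
    · have := Wk.finrank_add_finrank_le_finrank_inf_add W
      rw [finrank_euclideanSpace_fin] at this
      rw [Finset.card_insert_of_notMem hk, add_one_mul]
      omega
    · rw [Finset.sum_insert hk, Finset.sum_insert hk, map_add, LinearMap.add_apply, add_mul]
      exact (norm_add_le _ _).trans (add_le_add (hWk x hx.1) (hW x hx.2))

end SingularValues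

/-- Iterated Ky Fan singular value inequality for a sum of `K` matrices. -/
theorem sv_sum_le {p q K : ℕ} (A : Fin K → Matrix (Fin p) (Fin q) ℂ) (r : ℕ) :
    sv (∑ k, A k) (K * r + 1) ≤ ∑ k, sv (A k) (r + 1) := by
  by_cases hq : K * r + 1 ≤ q
  · obtain ⟨V, hVrank, hV⟩ := exists_subspace_sv_le_norm (∑ k, A k) (Nat.le_add_left 1 _) hq
    obtain ⟨W, hWrank, hW⟩ := exists_subspace_norm_sum_le A r Finset.univ
    rw [Finset.card_univ, Fintype.card_fin] at hWrank
    obtain ⟨x, hxV, hxW, hx⟩ := exists_mem_inf_ne_zero_of_finrank_lt (s := V) (t := W)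
      (by rw [finrank_euclideanSpace_fin]; omega)
    exact le_of_mul_le_mul_right ((hV x hxV).trans (hW x hxW)) (norm_pos_iff.mpr hx)
  · rw [sv, dif_neg (by omega)]
    exact Finset.sum_nonneg fun k _ => sv_nonneg _ _
end

section
/- Let S, A, Ā be Hermitian N×N matrices, Q an N×n matrix, and B Hermitian n×n. Then ‖F^{S + A Q B Q* A} − F^{S + Ā Q B Q* Ā}‖ ≤ (2/N) rank(A − Ā). -/
/-!
The two matrices differ by `A X A - A' X A' = (A - A') X A + A' X (A - A')` with `X = Q B Qᴴ`,
which has rank at most `2 rank (A - A')`. For Hermitian `M`, `M'` the numbers of eigenvalues `≤ x`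
differ by at most `rank (M - M')`: otherwise the span of the eigenvectors of `M` with eigenvalue
`≤ x`, the span of the eigenvectors of `M'` with eigenvalue `> x` and `ker (M - M')` have dimensions
adding up to more than `2N`, so they share a vector `w ≠ 0`, and then
`⟪w, M w⟫ ≤ x ‖w‖² < ⟪w, M' w⟫ = ⟪w, M w⟫`.
-/

open Matrix

/-- The empirical spectral distribution function of a Hermitian `N × N` matrix:
`F^M(x)` is the fraction of eigenvalues that are `≤ x`. -/
noncomputable def esd {N : ℕ} {M : Matrix (Fin N) (Fin N) ℂ} (hM : M.IsHermitian)
    (x : ℝ) : ℝ :=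
  ((Finset.univ.filter fun i => hM.eigenvalues i ≤ x).card : ℝ) / N

open Finset Module Submodule RCLike
open scoped InnerProductSpace

theorem Submodule.exists_ne_zero_mem_inf_inf {K V : Type*} [DivisionRing K] [AddCommGroup V]
    [Module K V] [FiniteDimensional K V] (U W X : Submodule K V)
    (h : 2 * finrank K V < finrank K U + finrank K W + finrank K X) :
    ∃ v ∈ U ⊓ W ⊓ X, v ≠ 0 := by
  have hUW := finrank_sup_add_finrank_inf_eq U W
  have hUWX := finrank_sup_add_finrank_inf_eq (U ⊓ W) X
  have := (U ⊔ W).finrank_le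
  have := (U ⊓ W ⊔ X).finrank_le
  refine exists_mem_ne_zero_of_ne_bot fun hbot => ?_
  rw [hbot, finrank_bot] at hUWX
  omega

section Orthonormal

variable {𝕜 E ι : Type*} [RCLike 𝕜] [NormedAddCommGroup E] [InnerProductSpace 𝕜 E] [Fintype ι]
  {v : ι → E} {T : E →ₗ[𝕜] E} {μ : ι → ℝ}

theorem Orthonormal.re_inner_sum_smul_map (hv : Orthonormal 𝕜 v)
    (hT : ∀ i, T (v i) = (μ i : 𝕜) • v i) (c : ι → 𝕜) :
    re ⟪∑ i, c i • v i, T (∑ i, c i • v i)⟫_𝕜 = ∑ i, μ i * ‖c i‖ ^ 2 := by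
  have hTc : T (∑ i, c i • v i) = ∑ i, ((μ i : 𝕜) * c i) • v i := by
    simp only [map_sum, map_smul, hT, smul_smul, mul_comm]
  rw [hTc, hv.inner_sum, map_sum]
  refine Finset.sum_congr rfl fun i _ => ?_
  rw [mul_left_comm, RCLike.conj_mul, ← ofReal_pow, ← ofReal_mul, ofReal_re]

theorem Orthonormal.norm_sum_smul_sq (hv : Orthonormal 𝕜 v) (c : ι → 𝕜) :
    ‖∑ i, c i • v i‖ ^ 2 = ∑ i, ‖c i‖ ^ 2 := by
  simpa using hv.re_inner_sum_smul_map (T := LinearMap.id) (μ := 1) (by simp) c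

theorem Orthonormal.re_inner_map_le_of_mem_span (hv : Orthonormal 𝕜 v)
    (hT : ∀ i, T (v i) = (μ i : 𝕜) • v i) {x : ℝ} (hμ : ∀ i, μ i ≤ x) {w : E}
    (hw : w ∈ span 𝕜 (Set.range v)) :
    re ⟪w, T w⟫_𝕜 ≤ x * ‖w‖ ^ 2 := by
  obtain ⟨c, rfl⟩ := (mem_span_range_iff_exists_fun 𝕜).1 hw
  rw [hv.re_inner_sum_smul_map hT, hv.norm_sum_smul_sq, Finset.mul_sum]
  gcongr with i
  exact hμ i

theorem Orthonormal.lt_re_inner_map_of_mem_span (hv : Orthonormal 𝕜 v)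
    (hT : ∀ i, T (v i) = (μ i : 𝕜) • v i) {x : ℝ} (hμ : ∀ i, x < μ i) {w : E}
    (hw : w ∈ span 𝕜 (Set.range v)) (hw0 : w ≠ 0) :
    x * ‖w‖ ^ 2 < re ⟪w, T w⟫_𝕜 := by
  obtain ⟨c, rfl⟩ := (mem_span_range_iff_exists_fun 𝕜).1 hw
  obtain ⟨j, hj⟩ : ∃ j, c j ≠ 0 := by
    by_contra! hc
    simp [hc] at hw0
  rw [hv.re_inner_sum_smul_map hT, hv.norm_sum_smul_sq, Finset.mul_sum]
  refine Finset.sum_lt_sum (fun i _ => by gcongr; exact (hμ i).le) ⟨j, mem_univ j, ?_⟩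
  gcongr
  exact hμ j

end Orthonormal

namespace Matrix

variable {K 𝕜 m n : Type*} [Fintype n]

theorem rank_add_le [Field K] (A B : Matrix m n K) : (A + B).rank ≤ A.rank + B.rank := by
  rw [rank, rank, rank, mulVecLin_add]
  exact (finrank_mono (LinearMap.range_add_le _ _)).trans (finrank_add_le_finrank_add_finrank _ _)

theorem rank_neg [Field K] (A : Matrix m n K) : (-A).rank = A.rank := by
  have h : (-A).mulVecLin = -A.mulVecLin := by ext; simp
  rw [rank, rank, h, LinearMap.range_neg]

theorem rank_sub_comm [Field K] (A B : Matrix m n K) : (A - B).rank = (B - A).rank := by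
  rw [← neg_sub, rank_neg]

theorem rank_mul_mul_sub_mul_mul_le [Fintype m] [Field K] (A A' : Matrix m n K)
    (X : Matrix n m K) : (A * X * A - A' * X * A').rank ≤ 2 * (A - A').rank := by
  have hsplit : A * X * A - A' * X * A' = (A - A') * (X * A) + A' * X * (A - A') := by
    simp only [Matrix.sub_mul, Matrix.mul_sub, Matrix.mul_assoc]
    abel
  calc (A * X * A - A' * X * A').rank
      ≤ ((A - A') * (X * A)).rank + (A' * X * (A - A')).rank := hsplit ▸ rank_add_le _ _
    _ ≤ (A - A').rank + (A - A').rank := add_le_add (rank_mul_le_left _ _) (rank_mul_le_right _ _)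
    _ = 2 * (A - A').rank := (two_mul _).symm

theorem finrank_ker_toEuclideanLin [RCLike 𝕜] [DecidableEq n] (A : Matrix n n 𝕜) :
    finrank 𝕜 (LinearMap.ker (toEuclideanLin A)) = Fintype.card n - A.rank := by
  have hrank : A.rank = finrank 𝕜 (LinearMap.range (toEuclideanLin A)) := by
    rw [toEuclideanLin_eq_toLin_orthonormal]
    exact rank_eq_finrank_range_toLin A _ _
  have := (toEuclideanLin A).finrank_range_add_finrank_ker
  rw [finrank_euclideanSpace] at this
  omega

namespace IsHermitian

variable [RCLike 𝕜] [DecidableEq n] {M M' : Matrix n n 𝕜} (hM : M.IsHermitian)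

theorem toEuclideanLin_eigenvectorBasis (i : n) :
    toEuclideanLin M (hM.eigenvectorBasis i) = (hM.eigenvalues i : 𝕜) • hM.eigenvectorBasis i := by
  apply WithLp.ofLp_injective
  rw [ofLp_toLpLin, toLin'_apply, hM.mulVec_eigenvectorBasis, WithLp.ofLp_smul,
    real_smul_eq_coe_smul (K := 𝕜)]

noncomputable def eigenvectorSpan (p : ℝ → Prop) : Submodule 𝕜 (EuclideanSpace 𝕜 n) :=
  span 𝕜 (Set.range fun i : {i // p (hM.eigenvalues i)} => hM.eigenvectorBasis i)

theorem finrank_eigenvectorSpan (p : ℝ → Prop) [DecidablePred p] :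
    finrank 𝕜 (hM.eigenvectorSpan p) = #{i | p (hM.eigenvalues i)} := by
  rw [eigenvectorSpan, finrank_span_eq_card, Fintype.card_subtype]
  exact hM.eigenvectorBasis.orthonormal.linearIndependent.comp _ Subtype.val_injective

theorem re_inner_le_of_mem_eigenvectorSpan {x : ℝ} {w : EuclideanSpace 𝕜 n}
    (hw : w ∈ hM.eigenvectorSpan (· ≤ x)) : re ⟪w, toEuclideanLin M w⟫_𝕜 ≤ x * ‖w‖ ^ 2 :=
  (hM.eigenvectorBasis.orthonormal.comp _ Subtype.val_injective).re_inner_map_le_of_mem_span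
    (fun i => hM.toEuclideanLin_eigenvectorBasis i) (fun i => i.2) hw

theorem lt_re_inner_of_mem_eigenvectorSpan {x : ℝ} {w : EuclideanSpace 𝕜 n}
    (hw : w ∈ hM.eigenvectorSpan (x < ·)) (hw0 : w ≠ 0) :
    x * ‖w‖ ^ 2 < re ⟪w, toEuclideanLin M w⟫_𝕜 :=
  (hM.eigenvectorBasis.orthonormal.comp _ Subtype.val_injective).lt_re_inner_map_of_mem_span
    (fun i => hM.toEuclideanLin_eigenvectorBasis i) (fun i => i.2) hw hw0

theorem card_eigenvalues_le_le_card_add_rank (hM' : M'.IsHermitian) (x : ℝ) :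
    #{i | hM.eigenvalues i ≤ x} ≤ #{i | hM'.eigenvalues i ≤ x} + (M - M').rank := by
  by_contra! hlt
  have hcompl : #{i | x < hM'.eigenvalues i} + #{i | hM'.eigenvalues i ≤ x} = Fintype.card n := by
    simpa [not_lt] using card_filter_add_card_filter_not (s := univ) (x < hM'.eigenvalues ·)
  have hle : #{i | hM.eigenvalues i ≤ x} ≤ Fintype.card n := (card_filter_le _ _).trans_eq card_univ
  obtain ⟨w, hw, hw0⟩ := exists_ne_zero_mem_inf_inf (hM.eigenvectorSpan (· ≤ x))
    (hM'.eigenvectorSpan (x < ·)) (LinearMap.ker (toEuclideanLin (M - M'))) <| by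
      rw [finrank_eigenvectorSpan, finrank_eigenvectorSpan, finrank_ker_toEuclideanLin,
        finrank_euclideanSpace]
      omega
  obtain ⟨⟨hwM, hwM'⟩, hwK⟩ := mem_inf.1 hw
  have hMw : toEuclideanLin M w = toEuclideanLin M' w := by
    rwa [LinearMap.mem_ker, map_sub, LinearMap.sub_apply, sub_eq_zero] at hwK
  have h₁ := hM.re_inner_le_of_mem_eigenvectorSpan hwM
  have h₂ := hM'.lt_re_inner_of_mem_eigenvectorSpan hwM' hw0
  rw [hMw] at h₁
  linarith

theorem abs_sub_card_eigenvalues_le_le_rank (hM' : M'.IsHermitian) (x : ℝ) :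
    |(#{i | hM.eigenvalues i ≤ x} : ℝ) - #{i | hM'.eigenvalues i ≤ x}| ≤ (M - M').rank := by
  have h₁ := hM.card_eigenvalues_le_le_card_add_rank hM' x
  have h₂ := hM'.card_eigenvalues_le_le_card_add_rank hM x
  rw [rank_sub_comm] at h₂
  rw [abs_sub_le_iff, sub_le_iff_le_add', sub_le_iff_le_add']
  exact ⟨mod_cast h₁, mod_cast h₂⟩

end IsHermitian

end Matrix

theorem esd_diff_le_two_rank_general {N n : ℕ} (S A A' : Matrix (Fin N) (Fin N) ℂ)
    (Q : Matrix (Fin N) (Fin n) ℂ) (B : Matrix (Fin n) (Fin n) ℂ)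
    (h1 : (S + A * Q * B * Qᴴ * A).IsHermitian)
    (h2 : (S + A' * Q * B * Qᴴ * A').IsHermitian) (x : ℝ) :
    |esd h1 x - esd h2 x| ≤ 2 * ((A - A').rank : ℝ) / N := by
  have hdiff : S + A * Q * B * Qᴴ * A - (S + A' * Q * B * Qᴴ * A') =
      A * (Q * B * Qᴴ) * A - A' * (Q * B * Qᴴ) * A' := by
    simp only [add_sub_add_left_eq_sub, Matrix.mul_assoc]
  have hcount := h1.abs_sub_card_eigenvalues_le_le_rank h2 x
  have hrank := rank_mul_mul_sub_mul_mul_le A A' (Q * B * Qᴴ)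
  rw [hdiff] at hcount
  rw [esd, esd, ← sub_div, abs_div, Nat.abs_cast]
  gcongr
  exact hcount.trans (mod_cast hrank)

theorem esd_diff_le_two_rank {N n : ℕ} (S A A' : Matrix (Fin N) (Fin N) ℂ)
    (Q : Matrix (Fin N) (Fin n) ℂ) (B : Matrix (Fin n) (Fin n) ℂ)
    (hS : S.IsHermitian) (hA : A.IsHermitian) (hA' : A'.IsHermitian) (hB : B.IsHermitian)
    (h1 : (S + A * Q * B * Qᴴ * A).IsHermitian)
    (h2 : (S + A' * Q * B * Qᴴ * A').IsHermitian) (x : ℝ) :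
    |esd h1 x - esd h2 x| ≤ 2 * ((A - A').rank : ℝ) / N :=
  esd_diff_le_two_rank_general S A A' Q B h1 h2 x
end
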